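/- If H is a self-bicommutant subgroup of a group Ξ with trivial centre Z(H) = {1} (where Z(H) = H ∩ H'), then H ∨ H' = Ξ, where H ∨ H' := (H ∪ H')''. Hence H is orthocomplemented in the lattice of self-bicommutant subgroups, assuming Ξ is centreless. -/

import Mathlib

namespace Subgroup

variable {G : Type*} [Group G]

theorem centralizer_union (s t : Set G) :
    centralizer (s ∪ t) = centralizer s ⊓ centralizer t :=
  SetLike.ext' (Set.centralizer_union (S := s) (T := t))

theorem centralizer_bot : centralizer ((⊥ : Subgroup G) : Set G) = ⊤ :=
  centralizer_eq_top_iff_subset.mpr (SetLike.coe_subset_coe.mpr bot_le)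

theorem centralizer_union_centralizer_eq_bot {H : Subgroup G}
    (hH : centralizer (centralizer (H : Set G) : Set G) = H)
    (hZ : H ⊓ centralizer (H : Set G) = ⊥) :
    centralizer ((H : Set G) ∪ (centralizer (H : Set G) : Set G)) = ⊥ := by
  rw [centralizer_union, hH, inf_comm, hZ]

end Subgroup

theorem orthocomplemented_of_trivial_centre_general {Ξ : Type*} [Group Ξ]
    (H : Subgroup Ξ)
    (hH : Subgroup.centralizer (Subgroup.centralizer (H : Set Ξ) : Set Ξ) = H)
    (hZ : H ⊓ Subgroup.centralizer (H : Set Ξ) = ⊥) :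
    Subgroup.centralizer
      ((Subgroup.centralizer ((H : Set Ξ) ∪ (Subgroup.centralizer (H : Set Ξ) : Set Ξ)) : Subgroup Ξ) : Set Ξ)
      = ⊤ := by
  rw [Subgroup.centralizer_union_centralizer_eq_bot hH hZ, Subgroup.centralizer_bot]

theorem orthocomplemented_of_trivial_centre {Ξ : Type*} [Group Ξ]
    (hΞ : Subgroup.center Ξ = ⊥) (H : Subgroup Ξ)
    (hH : Subgroup.centralizer (Subgroup.centralizer (H : Set Ξ) : Set Ξ) = H)
    (hZ : H ⊓ Subgroup.centralizer (H : Set Ξ) = ⊥) :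
    Subgroup.centralizer
      ((Subgroup.centralizer ((H : Set Ξ) ∪ (Subgroup.centralizer (H : Set Ξ) : Set Ξ)) : Subgroup Ξ) : Set Ξ)
      = ⊤ :=
  orthocomplemented_of_trivial_centre_general H hH hZ
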